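/- For all ξ_1,…,ξ_n ∈ ℤ, the asynchronous temporal robustness satisfies θ^c(x_ξ̄) ≥ θ^c(x) − max(|ξ_1|,…,|ξ_n|). -/

import Mathlib

open scoped Classical

noncomputable section

def shift {α : Type*} (x : ℤ → α) (κ : ℤ) : ℤ → α := fun t => x (t + κ)

def ashift {n : ℕ} (x : ℤ → Fin n → ℝ) (κ : Fin n → ℤ) : ℤ → Fin n → ℝ :=
  fun t i => x (t + κ i) i

def beta {n : ℕ} (c : (Fin n → ℝ) → ℤ → ℝ) (x : ℤ → Fin n → ℝ) : ℤ :=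
  if ∀ t : ℤ, 0 ≤ c (x t) t then 1 else -1

def absE (a : EReal) : EReal := max a (-a)

def eta {n : ℕ} (c : (Fin n → ℝ) → ℤ → ℝ) (x : ℤ → Fin n → ℝ) : EReal :=
  ((beta c x : ℝ) : EReal) * sSup ((fun τ : ℕ => ((τ : ℝ) : EReal)) ''
    {τ : ℕ | ∀ κ : ℤ, |κ| ≤ (τ : ℤ) → beta c (shift x κ) = beta c x})

def theta {n : ℕ} (c : (Fin n → ℝ) → ℤ → ℝ) (x : ℤ → Fin n → ℝ) : EReal :=
  ((beta c x : ℝ) : EReal) * sSup ((fun τ : ℕ => ((τ : ℝ) : EReal)) ''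
    {τ : ℕ | ∀ κ : Fin n → ℤ, (∀ i, |κ i| ≤ (τ : ℤ)) → beta c (ashift x κ) = beta c x})

/-!
Write `θ^c(x) = β^c(x) · D(x)`, where `D(x)` is the supremum of the radii `τ` for which every
asynchronous shift bounded by `τ` preserves `β^c(x)`. Composing shifts adds them, so with
`|ξ_i| ≤ m` a radius `τ ≥ m` for `x` yields the radius `τ - m` for `x_ξ̄`, whence
`D(x) ≤ D(x_ξ̄) + m`, and symmetrically `D(x_ξ̄) ≤ D(x) + m`. If `β` changes under the shift,
then radii `τ` of `x` and `τ'` of `x_ξ̄` satisfy `τ + τ' < m`: otherwise clamping `ξ̄` to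
`[-τ, τ]` gives a shift reachable within `τ` from `x` and within `τ'` from `x_ξ̄`. So
`D(x) + D(x_ξ̄) ≤ m`, which covers the two cases with opposite signs.
-/

def natSupE (A : Set ℕ) : EReal := sSup ((fun τ : ℕ => ((τ : ℝ) : EReal)) '' A)

lemma natSupE_nonneg {A : Set ℕ} (h : 0 ∈ A) : 0 ≤ natSupE A :=
  le_sSup ⟨0, h, by simp⟩

lemma natSupE_le_natSupE_add {A B : Set ℕ} {m : ℝ}
    (h : ∀ a ∈ A, ∃ b ∈ B, (a : ℝ) ≤ b + m) : natSupE A ≤ natSupE B + m := by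
  refine sSup_le ?_
  rintro _ ⟨a, ha, rfl⟩
  obtain ⟨b, hb, hab⟩ := h a ha
  calc ((a : ℝ) : EReal) ≤ ((b + m : ℝ) : EReal) := EReal.coe_le_coe hab
    _ = (b : ℝ) + (m : EReal) := EReal.coe_add _ _
    _ ≤ natSupE B + m := by gcongr; exact le_sSup ⟨b, hb, rfl⟩

lemma natSupE_add_natSupE_le {A B : Set ℕ} {m : ℝ}
    (h : ∀ a ∈ A, ∀ b ∈ B, (a : ℝ) + b ≤ m) : natSupE A + natSupE B ≤ m := by
  refine EReal.add_le_of_forall_lt fun a' ha' b' hb' => ?_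
  obtain ⟨_, ⟨a, ha, rfl⟩, ha'a⟩ := lt_sSup_iff.1 ha'
  obtain ⟨_, ⟨b, hb, rfl⟩, hb'b⟩ := lt_sSup_iff.1 hb'
  calc a' + b' ≤ ((a : ℝ) : EReal) + ((b : ℝ) : EReal) := add_le_add ha'a.le hb'b.le
    _ ≤ m := by exact_mod_cast h a ha b hb

section Robustness

variable {n : ℕ}

lemma ashift_ashift (x : ℤ → Fin n → ℝ) (ξ κ : Fin n → ℤ) :
    ashift (ashift x ξ) κ = ashift x (ξ + κ) := by
  funext t i
  simp only [ashift, Pi.add_apply, add_assoc, add_comm (κ i)]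

lemma ashift_zero (x : ℤ → Fin n → ℝ) : ashift x 0 = x := by
  funext t i
  simp [ashift]

lemma beta_eq_one_or_neg_one (c : (Fin n → ℝ) → ℤ → ℝ) (x : ℤ → Fin n → ℝ) :
    beta c x = 1 ∨ beta c x = -1 := by
  unfold beta
  split_ifs <;> simp

def invarianceRadii (c : (Fin n → ℝ) → ℤ → ℝ) (x : ℤ → Fin n → ℝ) : Set ℕ :=
  {τ : ℕ | ∀ κ : Fin n → ℤ, (∀ i, |κ i| ≤ (τ : ℤ)) → beta c (ashift x κ) = beta c x}

lemma theta_eq_beta_mul (c : (Fin n → ℝ) → ℤ → ℝ) (x : ℤ → Fin n → ℝ) :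
    theta c x = ((beta c x : ℝ) : EReal) * natSupE (invarianceRadii c x) := rfl

variable {c : (Fin n → ℝ) → ℤ → ℝ} {x : ℤ → Fin n → ℝ} {ξ : Fin n → ℤ}

lemma zero_mem_invarianceRadii : 0 ∈ invarianceRadii c x := by
  intro κ hκ
  obtain rfl : κ = 0 := funext fun i => abs_nonpos_iff.1 (hκ i)
  rw [ashift_zero]

lemma mem_invarianceRadii_ashift {τ τ' : ℕ} (hτ : τ ∈ invarianceRadii c x)
    (hξ : ∀ i, |ξ i| + τ' ≤ τ) : τ' ∈ invarianceRadii c (ashift x ξ) := by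
  intro κ hκ
  have hξκ : ∀ i, |ξ i + κ i| ≤ τ := fun i => by
    linarith [abs_add_le (ξ i) (κ i), hκ i, hξ i]
  rw [ashift_ashift, hτ (ξ + κ) hξκ, hτ ξ fun i => by linarith [hξ i]]

lemma beta_ashift_eq_of_mem {τ τ' : ℕ} (hτ : τ ∈ invarianceRadii c x)
    (hτ' : τ' ∈ invarianceRadii c (ashift x ξ)) (hξ : ∀ i, |ξ i| ≤ τ + τ') :
    beta c (ashift x ξ) = beta c x := by
  set κ : Fin n → ℤ := fun i => max (-τ) (min τ (ξ i))
  have hκ : ∀ i, |κ i| ≤ τ := fun i => abs_le.2 (by simp only [κ]; omega)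
  have hκξ : ∀ i, |(κ - ξ) i| ≤ τ' := fun i => by
    have hξi := abs_le.1 (hξ i)
    exact abs_le.2 (by simp only [Pi.sub_apply, κ]; omega)
  have h := hτ' (κ - ξ) hκξ
  rwa [ashift_ashift, add_sub_cancel, hτ κ hκ, eq_comm] at h

lemma natSupE_le_natSupE_ashift_add {m : ℤ} (hξ : ∀ i, |ξ i| ≤ m) :
    natSupE (invarianceRadii c x) ≤ natSupE (invarianceRadii c (ashift x ξ)) + (m : ℝ) := by
  refine natSupE_le_natSupE_add fun τ hτ => ?_
  by_cases hmτ : m ≤ τ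
  · refine ⟨(τ - m).toNat, mem_invarianceRadii_ashift hτ fun i => ?_, ?_⟩
    · linarith [hξ i, Int.toNat_of_nonneg (sub_nonneg.2 hmτ)]
    · exact_mod_cast (show (τ : ℤ) ≤ (τ - m).toNat + m by omega)
  · refine ⟨0, zero_mem_invarianceRadii, ?_⟩
    rw [Nat.cast_zero, zero_add]
    exact_mod_cast (not_le.1 hmτ).le

lemma natSupE_add_natSupE_ashift_le {m : ℤ} (hξ : ∀ i, |ξ i| ≤ m)
    (hβ : beta c (ashift x ξ) ≠ beta c x) :
    natSupE (invarianceRadii c x) + natSupE (invarianceRadii c (ashift x ξ)) ≤ (m : ℝ) := by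
  refine natSupE_add_natSupE_le fun τ hτ τ' hτ' => ?_
  by_contra! hlt
  exact hβ (beta_ashift_eq_of_mem hτ hτ' fun i => (hξ i).trans (by exact_mod_cast hlt.le))

end Robustness

theorem stmt3_general {n : ℕ} (c : (Fin n → ℝ) → ℤ → ℝ) (x : ℤ → Fin n → ℝ) (ξ : Fin n → ℤ)
    (ξmax : ℤ) (hub : ∀ i, |ξ i| ≤ ξmax) :
    theta c (ashift x ξ) ≥ theta c x - ((ξmax : ℝ) : EReal) := by
  set D := natSupE (invarianceRadii c x)
  set D' := natSupE (invarianceRadii c (ashift x ξ))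
  set m : EReal := ((ξmax : ℝ) : EReal)
  have hD : 0 ≤ D := natSupE_nonneg zero_mem_invarianceRadii
  have hD' : 0 ≤ D' := natSupE_nonneg zero_mem_invarianceRadii
  have hDD' : D ≤ D' + m := natSupE_le_natSupE_ashift_add hub
  have hD'D : D' ≤ D + m := by
    simpa only [ashift_ashift, add_neg_cancel, ashift_zero] using
      natSupE_le_natSupE_ashift_add (x := ashift x ξ) (ξ := -ξ) (c := c) (by simpa using hub)
  have hsum (hβ : beta c (ashift x ξ) ≠ beta c x) : D + D' ≤ m :=
    natSupE_add_natSupE_ashift_le hub hβ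
  rw [ge_iff_le, theta_eq_beta_mul, theta_eq_beta_mul]
  rcases beta_eq_one_or_neg_one c x with hβ | hβ <;>
    rcases beta_eq_one_or_neg_one c (ashift x ξ) with hβ' | hβ' <;>
    simp only [hβ, hβ', Int.cast_one, Int.cast_neg, EReal.coe_one, EReal.coe_neg, one_mul,
      neg_one_mul]
  · exact EReal.sub_le_of_le_add hDD'
  · exact EReal.sub_le_of_le_add' <|
      (EReal.le_sub_iff_add_le (.inr (EReal.coe_ne_bot _)) (.inr (EReal.coe_ne_top _))).2
        (hsum (by rw [hβ, hβ']; norm_num))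
  · have hm : 0 ≤ m := (add_nonneg hD hD').trans (hsum (by rw [hβ, hβ']; norm_num))
    exact EReal.sub_le_of_le_add ((EReal.neg_le_zero.2 hD).trans (add_nonneg hD' hm))
  · rw [← EReal.neg_add (.inr (EReal.coe_ne_top _)) (.inr (EReal.coe_ne_bot _)),
      EReal.neg_le_neg_iff]
    exact hD'D

/-- θ^c(x_ξ̄) ≥ θ^c(x) − max(|ξ_1|,…,|ξ_n|), where ξmax is the maximum of the |ξ_i|. -/
theorem stmt3 {n : ℕ} (c : (Fin n → ℝ) → ℤ → ℝ) (x : ℤ → Fin n → ℝ) (ξ : Fin n → ℤ)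
    (ξmax : ℤ) (hub : ∀ i, |ξ i| ≤ ξmax) (hmem : ∃ i, |ξ i| = ξmax) :
    theta c (ashift x ξ) ≥ theta c x - ((ξmax : ℝ) : EReal) :=
  stmt3_general c x ξ ξmax hub
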